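/- (Node-count bound underlying Theorem 1, 'Depth-first branch-and-bound runs in O(k·|Z|) time'.) If Z is nonempty, then the total number of strings visited by depth-first branch-and-bound with the lookahead bound, namely strings of positive length whose longest proper prefix is alive, satisfies ∑_{j=1}^{k} |{p ∈ A^j : the length-(j−1) prefix of p is alive}| ≤ σ · k · |Z| (here the empty prefix is counted as alive when L_0 > ε). -/

import Mathlib

open Finset

noncomputable def colMax {A : Type*} [Fintype A] [Nonempty A] (W : ℕ → A → ℝ) (h : ℕ) : ℝ :=
  Finset.univ.sup' Finset.univ_nonempty (W h)

noncomputable def lookahead {A : Type*} [Fintype A] [Nonempty A]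
    (k : ℕ) (W : ℕ → A → ℝ) (j : ℕ) : ℝ :=
  ∏ h ∈ Finset.Ico j k, colMax W h

noncomputable def prefScore {A : Type*} (W : ℕ → A → ℝ) {j : ℕ} (p : Fin j → A) : ℝ :=
  ∏ l : Fin j, W l (p l)

def PrefixAlive {A : Type*} [Fintype A] [Nonempty A]
    (k : ℕ) (W : ℕ → A → ℝ) (ε : ℝ) {j : ℕ} (p : Fin j → A) : Prop :=
  prefScore W p * lookahead k W j > ε

noncomputable def score {A : Type*} (k : ℕ) (W : ℕ → A → ℝ) (w : Fin k → A) : ℝ :=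
  ∏ j : Fin k, W j (w j)

/-!
Completing an alive prefix of length `j ≤ k` by a maximiser of every remaining column gives a
`k`-mer whose score is exactly the prefix score times the lookahead bound `L_j`, hence an alive
`k`-mer; this completion is injective, so there are at most `|Z|` alive prefixes of each length.
A visited string of length `j + 1` is an alive prefix of length `j` followed by any of the `σ`
symbols, and summing over `j < k` gives `σ · k · |Z|`.
-/

theorem ncard_setOf_init_mem {α : Type*} {n : ℕ} (s : Set (Fin n → α)) :
    {p : Fin (n + 1) → α | Fin.init p ∈ s}.ncard = Nat.card α * s.ncard := by
  have : {p : Fin (n + 1) → α | Fin.init p ∈ s} =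
      (Fin.snocEquiv fun _ => α).symm ⁻¹' (Set.univ ×ˢ s) := by
    ext p; simp
  rw [this, Set.ncard_preimage_of_injective_subset_range (Equiv.injective _) (by simp),
    Set.ncard_prod, Set.ncard_univ]

section Greedy

variable {A : Type*} [Fintype A] [Nonempty A] (k : ℕ) (W : ℕ → A → ℝ)

theorem exists_colMax_eq (h : ℕ) : ∃ a, colMax W h = W h a := by
  obtain ⟨a, -, ha⟩ := Finset.exists_mem_eq_sup' Finset.univ_nonempty (W h)
  exact ⟨a, ha⟩

noncomputable def colArgmax (h : ℕ) : A := (exists_colMax_eq W h).choose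

theorem colMax_eq_colArgmax (h : ℕ) : colMax W h = W h (colArgmax W h) :=
  (exists_colMax_eq W h).choose_spec

noncomputable def greedyCompletion {j : ℕ} (p : Fin j → A) : Fin k → A :=
  fun i => if h : (i : ℕ) < j then p ⟨i, h⟩ else colArgmax W i

theorem score_greedyCompletion {j : ℕ} (hj : j ≤ k) (p : Fin j → A) :
    score k W (greedyCompletion k W p) = prefScore W p * lookahead k W j := by
  set f : ℕ → ℝ := fun i => W i (if h : i < j then p ⟨i, h⟩ else colArgmax W i)
  have hpref : prefScore W p = ∏ i ∈ range j, f i := by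
    rw [← Fin.prod_univ_eq_prod_range]
    exact Finset.prod_congr rfl fun l _ => by simp [f]
  have hlook : lookahead k W j = ∏ i ∈ Ico j k, f i :=
    Finset.prod_congr rfl fun i hi => by
      simp only [f, colMax_eq_colArgmax, dif_neg (Finset.mem_Ico.mp hi).1.not_gt]
  rw [hpref, hlook, prod_range_mul_prod_Ico f hj, ← Fin.prod_univ_eq_prod_range]
  rfl

theorem greedyCompletion_injective {j : ℕ} (hj : j ≤ k) :
    Function.Injective (greedyCompletion (j := j) k W) := by
  intro p q hpq
  funext l
  simpa [greedyCompletion] using congrFun hpq ⟨l, l.isLt.trans_le hj⟩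

theorem ncard_setOf_prefixAlive_le (ε : ℝ) {j : ℕ} (hj : j ≤ k) :
    {p : Fin j → A | PrefixAlive k W ε p}.ncard ≤ {w : Fin k → A | score k W w > ε}.ncard :=
  Set.ncard_le_ncard_of_injOn (greedyCompletion k W)
    (fun p hp => by rwa [Set.mem_ofPred_eq, score_greedyCompletion k W hj])
    (greedyCompletion_injective k W hj).injOn

end Greedy

theorem branch_and_bound_visited_nodes_bound_general
    {A : Type*} [Fintype A] [Nonempty A]
    (k : ℕ) (W : ℕ → A → ℝ)
    (ε : ℝ) :
    ∑ j ∈ Finset.range k,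
        Set.ncard {p : Fin (j + 1) → A |
          PrefixAlive k W ε (fun l : Fin j => p l.castSucc)} ≤
      Fintype.card A * k * Set.ncard {w : Fin k → A | score k W w > ε} := by
  calc ∑ j ∈ range k, Set.ncard {p : Fin (j + 1) → A |
          PrefixAlive k W ε (fun l : Fin j => p l.castSucc)}
      = ∑ j ∈ range k, Fintype.card A * {q : Fin j → A | PrefixAlive k W ε q}.ncard := by
        refine Finset.sum_congr rfl fun j _ => ?_
        rw [← Nat.card_eq_fintype_card]
        exact ncard_setOf_init_mem {q : Fin j → A | PrefixAlive k W ε q}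
    _ ≤ ∑ _j ∈ range k, Fintype.card A * {w : Fin k → A | score k W w > ε}.ncard :=
        Finset.sum_le_sum fun j hj => Nat.mul_le_mul_left _
          (ncard_setOf_prefixAlive_le k W ε (Finset.mem_range.mp hj).le)
    _ = Fintype.card A * k * {w : Fin k → A | score k W w > ε}.ncard := by
        rw [Finset.sum_const, Finset.card_range, smul_eq_mul]
        ring

/-- Node-count bound for depth-first branch-and-bound: if `Z` is nonempty, the number of
visited strings (strings of positive length `j+1` whose longest proper prefix is alive)
is at most `σ · k · |Z|`. -/
theorem branch_and_bound_visited_nodes_bound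
    {A : Type*} [Fintype A] [Nonempty A]
    (k : ℕ) (hk : 1 ≤ k) (W : ℕ → A → ℝ) (hW : ∀ j a, 0 ≤ W j a)
    (ε : ℝ) (hε : 0 ≤ ε)
    (hZ : {w : Fin k → A | score k W w > ε}.Nonempty) :
    ∑ j ∈ Finset.range k,
        Set.ncard {p : Fin (j + 1) → A |
          PrefixAlive k W ε (fun l : Fin j => p l.castSucc)} ≤
      Fintype.card A * k * Set.ncard {w : Fin k → A | score k W w > ε} :=
  branch_and_bound_visited_nodes_bound_general k W ε
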